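/- arXiv:2307.04165 — 2 statements merged into one kernel-verified Lean document; each statement's English description precedes it below -/
import Mathlib

section
/- Consider the rigid-body translational kinematics v̇ = R(t)a(t) + g, ṗ = v, where R : ℝ → SO(3), a : ℝ → ℝ³, g ∈ ℝ³ constant. Then for t_k < t_{k+1} with Δt := t_{k+1} − t_k, v(t_{k+1}) = v(t_k) + R(t_k) Δv + Δt·g and p(t_{k+1}) = p(t_k) + Δt·v(t_k) + ½Δt²·g + R(t_k) Δp, where Δv := ∫_{t_k}^{t_{k+1}} ΔR_{t_k}^s a(s) ds and Δp := ∫_{t_k}^{t_{k+1}} ∫_{t_k}^{τ} ΔR_{t_k}^s a(s) ds dτ, with ΔR_{t_k}^s := R(t_k)ᵀR(s). -/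
open Matrix

attribute [local instance] Matrix.normedAddCommGroup Matrix.normedSpace

/-- For the rigid-body translational kinematics `v̇ = R a + g`, `ṗ = v`
with `R : ℝ → SO(3)`, and `Δt := t_{k+1} − t_k`, one has
`v (t_{k+1}) = v t_k + R t_k *ᵥ Δv + Δt • g` and
`p (t_{k+1}) = p t_k + Δt • v t_k + (Δt²/2) • g + R t_k *ᵥ Δp`, where the preintegrated
quantities `Δv = ∫ ΔR_{t_k}^s a(s) ds` and `Δp = ∫∫ ΔR_{t_k}^s a(s) ds dτ` (with
`ΔR_{t_k}^s := (R t_k)ᵀ R s`) depend only on `a` and the relative rotations, not on the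
initial conditions `v t_k`, `p t_k` nor on `R t_k`. -/
theorem imu_preintegration_translation
    (R : ℝ → Matrix (Fin 3) (Fin 3) ℝ) (a : ℝ → (Fin 3 → ℝ)) (g : Fin 3 → ℝ)
    (hR : Continuous R) (ha : Continuous a)
    (hRSO : ∀ t, (R t)ᵀ * R t = 1 ∧ (R t).det = 1)
    (v p : ℝ → (Fin 3 → ℝ))
    (hv : ∀ t, HasDerivAt v ((R t).mulVec (a t) + g) t)
    (hp : ∀ t, HasDerivAt p (v t) t)
    (tk tk1 : ℝ) (htk : tk < tk1)
    (Δv Δp : Fin 3 → ℝ)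
    (hΔv : Δv = ∫ s in tk..tk1, ((R tk)ᵀ * R s).mulVec (a s))
    (hΔp : Δp = ∫ τ in tk..tk1, ∫ s in tk..τ, ((R tk)ᵀ * R s).mulVec (a s)) :
    v tk1 = v tk + (R tk).mulVec Δv + (tk1 - tk) • g ∧
    p tk1 = p tk + (tk1 - tk) • v tk + ((tk1 - tk) ^ 2 / 2) • g + (R tk).mulVec Δp := by
  have hinv : R tk * (R tk)ᵀ = 1 := mul_eq_one_comm.mp (hRSO tk).1
  set F : ℝ → Fin 3 → ℝ := fun s => ((R tk)ᵀ * R s).mulVec (a s) with hFdef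
  have hFc : Continuous F := (continuous_const.matrix_mul hR).matrix_mulVec ha
  set L : (Fin 3 → ℝ) →L[ℝ] (Fin 3 → ℝ) :=
    LinearMap.toContinuousLinearMap (Matrix.mulVecLin (R tk)) with hLdef
  have hLapp : ∀ x, L x = (R tk).mulVec x := fun x => rfl
  have hLF : ∀ s, L (F s) = (R s).mulVec (a s) := by
    intro s
    rw [hLapp, hFdef]
    simp only [Matrix.mulVec_mulVec, ← Matrix.mul_assoc, hinv, Matrix.one_mul]
  have hvR : Continuous fun s => (R s).mulVec (a s) := hR.matrix_mulVec ha
  -- key: value of v at any time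
  have key : ∀ t, v t = v tk + (R tk).mulVec (∫ s in tk..t, F s) + (t - tk) • g := by
    intro t
    have h1 : ∫ s in tk..t, ((R s).mulVec (a s) + g) = v t - v tk :=
      intervalIntegral.integral_eq_sub_of_hasDerivAt (fun s _ => hv s)
        ((hvR.add continuous_const).intervalIntegrable _ _)
    have h2 : ∫ s in tk..t, ((R s).mulVec (a s) + g)
        = (R tk).mulVec (∫ s in tk..t, F s) + (t - tk) • g := by
      rw [intervalIntegral.integral_add (hvR.intervalIntegrable _ _)
        (intervalIntegrable_const), intervalIntegral.integral_const]
      congr 1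
      rw [← hLapp, ← L.intervalIntegral_comp_comm (hFc.intervalIntegrable _ _)]
      simp only [hLF]
    rw [h2] at h1
    have := h1.symm
    rw [sub_eq_iff_eq_add] at this
    rw [this]; abel
  constructor
  · rw [hΔv]; exact key tk1
  · -- continuity of the primitive
    have hG : Continuous fun t => ∫ s in tk..t, F s :=
      intervalIntegral.continuous_primitive (fun a b => hFc.intervalIntegrable a b) tk
    have h1 : ∫ τ in tk..tk1, v τ = p tk1 - p tk := by
      refine intervalIntegral.integral_eq_sub_of_hasDerivAt (fun s _ => hp s) ?_
      have hvcont : Continuous v := by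
        have : v = fun t => v tk + (R tk).mulVec (∫ s in tk..t, F s) + (t - tk) • g :=
          funext key
        rw [this]
        exact (continuous_const.add ((continuous_const.matrix_mulVec hG))).add
          ((continuous_id.sub continuous_const).smul continuous_const)
      exact hvcont.intervalIntegrable _ _
    have h2 : ∫ τ in tk..tk1, v τ
        = (tk1 - tk) • v tk + (R tk).mulVec Δp + ((tk1 - tk) ^ 2 / 2) • g := by
      have hvform : (fun τ => v τ)
          = fun τ => v tk + (R tk).mulVec (∫ s in tk..τ, F s) + (τ - tk) • g :=
        funext key
      rw [hvform]
      have hi1 : IntervalIntegrable (fun τ : ℝ => v tk) MeasureTheory.volume tk tk1 :=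
        intervalIntegrable_const
      have hi2 : IntervalIntegrable (fun τ => (R tk).mulVec (∫ s in tk..τ, F s))
          MeasureTheory.volume tk tk1 :=
        (continuous_const.matrix_mulVec hG).intervalIntegrable _ _
      have hi3 : IntervalIntegrable (fun τ : ℝ => (τ - tk) • g)
          MeasureTheory.volume tk tk1 :=
        (((continuous_id.sub continuous_const).smul continuous_const :
          Continuous fun τ : ℝ => (τ - tk) • g)).intervalIntegrable _ _
      rw [intervalIntegral.integral_add (hi1.add hi2) hi3,
        intervalIntegral.integral_add hi1 hi2, intervalIntegral.integral_const]
      have e2 : (∫ τ in tk..tk1, (R tk).mulVec (∫ s in tk..τ, F s))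
          = (R tk).mulVec Δp := by
        have : (fun τ => (R tk).mulVec (∫ s in tk..τ, F s))
            = fun τ => L (∫ s in tk..τ, F s) := by
          funext τ; rw [hLapp]
        rw [this, L.intervalIntegral_comp_comm (hG.intervalIntegrable _ _), hΔp, hLapp]
      have e3 : (∫ τ in tk..tk1, (τ - tk) • g) = ((tk1 - tk) ^ 2 / 2) • g := by
        rw [intervalIntegral.integral_smul_const]
        congr 1
        have : (fun τ : ℝ => τ - tk) = fun τ => id (τ - tk) := rfl
        rw [this, intervalIntegral.integral_comp_sub_right (fun x => id x) tk]
        simp only [id_eq, integral_id, sub_self]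
        ring
      rw [e2, e3]
    rw [h2, eq_sub_iff_add_eq] at h1
    rw [← h1]; abel
end

section
/- For the discrete-time LTV system x_{k+1} = F_k x_k + v_k, y_k = C_k x_k + D_k u_k obtained by exact sampling of ẋ = A(t)x + B(t)u at instants {t_k} (so F_k = Φ(t_{k+1},t_k)), uniform complete observability of the continuous-time pair (A(t), C(t)) is necessary for uniform complete observability of the sampled pair (Φ(t_{k+1},t_k), C(t_k)) when the sampling intervals are bounded: if the discrete-time observability Gramian Σ_{i=k}^{k+k₁} Ψ(i,k)ᵀ C_{t_i}ᵀ C_{t_i} Ψ(i,k) ⪰ δI for all k, then the continuous-time observability Gramian over [t_k, t_{k+k₁+1}] is also bounded below by δ′I for some δ′ > 0. -/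
open Matrix

attribute [local instance] Matrix.normedAddCommGroup Matrix.normedSpace

open Set Filter Topology MeasureTheory

/-!
On a window `[a, a + T]` the transition matrix `Φ(·, a)` is bounded by Grönwall's inequality,
hence uniformly Lipschitz; with `C` bounded and uniformly continuous, the Gramian integrand
`τ ↦ Φ(τ, a)ᵀ C(τ)ᵀ C(τ) Φ(τ, a)` is therefore equicontinuous uniformly in `a`. So there is
`η ≤ Tmin` such that on `[tᵢ, tᵢ + η] ⊆ [tᵢ, tᵢ₊₁]` the integrand stays `ε`-close to its value at
the sample `tᵢ`. Integrating over these pieces bounds the continuous Gramian from below by `η`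
times the discrete one, minus an error `η (k₁ + 1) n ε` that is absorbed for small `ε`.
-/

namespace Matrix

variable {l m n α : Type*} [Fintype l] [Fintype m] [Fintype n]

lemma norm_mul_le_card_mul [NormedRing α] (A : Matrix l m α) (B : Matrix m n α) :
    ‖A * B‖ ≤ Fintype.card m * ‖A‖ * ‖B‖ := by
  refine (norm_le_iff (by positivity)).2 fun i j => ?_
  calc ‖(A * B) i j‖ ≤ ∑ k, ‖A i k‖ * ‖B k j‖ :=
        (norm_sum_le _ _).trans (Finset.sum_le_sum fun k _ => norm_mul_le _ _)
    _ ≤ ∑ _k : m, ‖A‖ * ‖B‖ := by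
        gcongr <;> exact norm_entry_le_entrywise_sup_norm _
    _ = Fintype.card m * ‖A‖ * ‖B‖ := by simp [mul_assoc]

lemma norm_mul_sub_mul_le [NormedRing α] (A A' : Matrix l m α) (B B' : Matrix m n α) :
    ‖A * B - A' * B'‖ ≤ Fintype.card m * (‖A - A'‖ * ‖B‖ + ‖A'‖ * ‖B - B'‖) := by
  calc ‖A * B - A' * B'‖ = ‖(A - A') * B + A' * (B - B')‖ := by
        rw [Matrix.sub_mul, Matrix.mul_sub]; abel_nf
    _ ≤ _ := (norm_add_le _ _).trans <| by
        rw [mul_add, ← mul_assoc, ← mul_assoc]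
        exact add_le_add (norm_mul_le_card_mul _ _) (norm_mul_le_card_mul _ _)

lemma tendsto_mul_sub_mul_nhds_zero {β : Type*} {L : Filter β} {A A' : β → Matrix l m ℝ}
    {B B' : β → Matrix m n ℝ} {R R' : ℝ} (hA : Tendsto (fun i => A i - A' i) L (𝓝 0))
    (hB : Tendsto (fun i => B i - B' i) L (𝓝 0)) (hA' : ∀ᶠ i in L, ‖A' i‖ ≤ R)
    (hB' : ∀ᶠ i in L, ‖B i‖ ≤ R') :
    Tendsto (fun i => A i * B i - A' i * B' i) L (𝓝 0) := by
  have hbound : Tendsto (fun i => Fintype.card m * (‖A i - A' i‖ * R' + R * ‖B i - B' i‖)) L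
      (𝓝 0) := by
    simpa using ((hA.norm.mul_const R').add (hB.norm.const_mul R)).const_mul (Fintype.card m : ℝ)
  refine squeeze_zero_norm' ?_ hbound
  filter_upwards [hA', hB'] with i hAi hBi
  exact (norm_mul_sub_mul_le _ _ _ _).trans (by gcongr)

lemma abs_dotProduct_mulVec_le (M : Matrix n n ℝ) (x : n → ℝ) :
    |x ⬝ᵥ M *ᵥ x| ≤ Fintype.card n * ‖M‖ * (x ⬝ᵥ x) := by
  calc |x ⬝ᵥ M *ᵥ x| = |∑ i, ∑ j, x i * M i j * x j| := by
        simp only [dotProduct, mulVec, Finset.mul_sum, mul_assoc]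
    _ ≤ ∑ i, ∑ j, ‖M‖ * (|x i| * |x j|) := by
        refine (Finset.abs_sum_le_sum_abs _ _).trans (Finset.sum_le_sum fun i _ =>
          (Finset.abs_sum_le_sum_abs _ _).trans (Finset.sum_le_sum fun j _ => ?_))
        rw [abs_mul, abs_mul, mul_comm |x i|, mul_assoc, ← Real.norm_eq_abs (M i j)]
        exact mul_le_mul_of_nonneg_right (norm_entry_le_entrywise_sup_norm M) (by positivity)
    _ = ‖M‖ * (∑ i, |x i|) ^ 2 := by simp_rw [sq, Finset.sum_mul_sum, Finset.mul_sum]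
    _ ≤ ‖M‖ * (Fintype.card n * ∑ i, |x i| ^ 2) :=
        mul_le_mul_of_nonneg_left sq_sum_le_card_mul_sum_sq (norm_nonneg M)
    _ = Fintype.card n * ‖M‖ * (x ⬝ᵥ x) := by
        simp only [dotProduct, sq_abs, ← sq]; ring

noncomputable def transposeₗᵢ : Matrix m n ℝ →ₗᵢ[ℝ] Matrix n m ℝ where
  toLinearMap := (transposeLinearEquiv m n ℝ ℝ).toLinearMap
  norm_map' := norm_transpose

lemma transpose_intervalIntegral (G : ℝ → Matrix m n ℝ) (a b : ℝ) :
    (∫ τ in a..b, G τ)ᵀ = ∫ τ in a..b, (G τ)ᵀ :=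
  (transposeₗᵢ.intervalIntegral_comp_comm G).symm

lemma isHermitian_intervalIntegral {G : ℝ → Matrix n n ℝ} (hG : ∀ τ, (G τ).IsHermitian)
    (a b : ℝ) : (∫ τ in a..b, G τ).IsHermitian := by
  simp only [IsHermitian, conjTranspose_eq_transpose_of_trivial] at hG ⊢
  rw [transpose_intervalIntegral]
  simp only [hG]

noncomputable def quadFormCLM (x : n → ℝ) : Matrix n n ℝ →L[ℝ] ℝ :=
  LinearMap.toContinuousLinearMap
    { toFun := fun M => x ⬝ᵥ M *ᵥ x
      map_add' := fun M N => by simp [add_mulVec, dotProduct_add]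
      map_smul' := fun c M => by simp [smul_mulVec, dotProduct_smul] }

lemma dotProduct_intervalIntegral_mulVec {G : ℝ → Matrix n n ℝ} (hG : Continuous G)
    (a b : ℝ) (x : n → ℝ) :
    x ⬝ᵥ (∫ τ in a..b, G τ) *ᵥ x = ∫ τ in a..b, x ⬝ᵥ G τ *ᵥ x :=
  ((quadFormCLM x).intervalIntegral_comp_comm (hG.intervalIntegrable a b)).symm

end Matrix

lemma mul_le_intervalIntegral_of_le_on {f : ℝ → ℝ} {c d η m : ℝ} (hη : 0 ≤ η) (hd : c + η ≤ d)
    (hf : IntervalIntegrable f volume c d) (hf0 : ∀ τ ∈ Icc (c + η) d, 0 ≤ f τ)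
    (hm : ∀ τ ∈ Icc c (c + η), m ≤ f τ) :
    η * m ≤ ∫ τ in c..d, f τ := by
  have hc : c ≤ c + η := le_add_of_nonneg_right hη
  have hf₁ : IntervalIntegrable f volume c (c + η) :=
    hf.mono_set (uIcc_subset_uIcc_left (by simp [uIcc_of_le (hc.trans hd), hc, hd]))
  have hf₂ : IntervalIntegrable f volume (c + η) d :=
    hf.mono_set (uIcc_subset_uIcc_right (by simp [uIcc_of_le (hc.trans hd), hc, hd]))
  rw [← intervalIntegral.integral_add_adjacent_intervals hf₁ hf₂]
  have h₁ : η * m ≤ ∫ τ in c..c + η, f τ := by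
    simpa using intervalIntegral.integral_mono_on hc intervalIntegrable_const hf₁ hm
  linarith [intervalIntegral.integral_nonneg (μ := volume) hd hf0]

lemma mul_sum_le_intervalIntegral {f : ℝ → ℝ} (hf : Continuous f) (hf0 : ∀ τ, 0 ≤ f τ)
    {s : ℕ → ℝ} {N : ℕ} {η e : ℝ} (hη : 0 ≤ η) (hs : ∀ i < N, s i + η ≤ s (i + 1))
    (hfe : ∀ i < N, ∀ τ ∈ Icc (s i) (s i + η), f (s i) - e ≤ f τ) :
    η * ∑ i ∈ Finset.range N, (f (s i) - e) ≤ ∫ τ in s 0..s N, f τ := by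
  rw [← intervalIntegral.sum_integral_adjacent_intervals fun i _ => hf.intervalIntegrable _ _,
    Finset.mul_sum]
  refine Finset.sum_le_sum fun i hi => ?_
  have hi := Finset.mem_range.1 hi
  exact mul_le_intervalIntegral_of_le_on hη (hs i hi) (hf.intervalIntegrable _ _)
    (fun τ _ => hf0 τ) (hfe i hi)

namespace Matrix

variable {n : Type*} [Fintype n] [DecidableEq n]

lemma posSemidef_intervalIntegral_sub_smul_one {G : ℝ → Matrix n n ℝ} (hG : Continuous G)
    (hG0 : ∀ τ, (G τ).PosSemidef) {s : ℕ → ℝ} {N : ℕ} {η ε δ c : ℝ} (hη : 0 ≤ η)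
    (hs : ∀ i < N, s i + η ≤ s (i + 1))
    (hGε : ∀ i < N, ∀ τ ∈ Icc (s i) (s i + η), ‖G τ - G (s i)‖ ≤ ε)
    (hc : c + N * Fintype.card n * ε ≤ δ)
    (hδ : (∑ i ∈ Finset.range N, G (s i) - δ • (1 : Matrix n n ℝ)).PosSemidef) :
    ((∫ τ in s 0..s N, G τ) - (η * c) • (1 : Matrix n n ℝ)).PosSemidef := by
  refine .of_dotProduct_mulVec_nonneg ?_ fun x => ?_
  · exact (isHermitian_intervalIntegral (fun τ => (hG0 τ).1) _ _).sub
      (isHermitian_one.smul (IsSelfAdjoint.all _))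
  have hxx : 0 ≤ x ⬝ᵥ x := by simpa using dotProduct_star_self_nonneg x
  set q : ℝ → ℝ := fun τ => x ⬝ᵥ G τ *ᵥ x
  have hq0 : ∀ τ, 0 ≤ q τ := fun τ => by simpa using (hG0 τ).dotProduct_mulVec_nonneg x
  have hqε : ∀ i < N, ∀ τ ∈ Icc (s i) (s i + η),
      q (s i) - Fintype.card n * ε * (x ⬝ᵥ x) ≤ q τ := fun i hi τ hτ => by
    have h := abs_dotProduct_mulVec_le (G τ - G (s i)) x
    rw [sub_mulVec, dotProduct_sub] at h
    have := mul_le_mul_of_nonneg_right (mul_le_mul_of_nonneg_left (hGε i hi τ hτ)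
      (Nat.cast_nonneg (Fintype.card n))) hxx
    linarith [(abs_le.1 h).1]
  have hsum : δ * (x ⬝ᵥ x) ≤ ∑ i ∈ Finset.range N, q (s i) := by
    have h := hδ.dotProduct_mulVec_nonneg x
    simp only [star_trivial, sub_mulVec, dotProduct_sub, sum_mulVec, dotProduct_sum,
      smul_mulVec, one_mulVec, dotProduct_smul, smul_eq_mul] at h
    linarith
  have hint := mul_sum_le_intervalIntegral
    (continuous_const.dotProduct (hG.matrix_mulVec continuous_const)) hq0 hη hs hqε
  rw [← dotProduct_intervalIntegral_mulVec hG, Finset.sum_sub_distrib, Finset.sum_const,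
    Finset.card_range, nsmul_eq_mul] at hint
  have hcx : c * (x ⬝ᵥ x) ≤
      ∑ i ∈ Finset.range N, q (s i) - N * (Fintype.card n * ε * (x ⬝ᵥ x)) := by
    nlinarith
  simp only [star_trivial, sub_mulVec, dotProduct_sub, smul_mulVec, one_mulVec, dotProduct_smul,
    smul_eq_mul]
  nlinarith [mul_le_mul_of_nonneg_left hcx hη]

end Matrix

section LinearODE

variable {ι κ : Type*} [Fintype ι] [Fintype κ] {A : ℝ → Matrix ι ι ℝ} {M : ℝ}

lemma norm_mul_le_of_forall_norm_le (hA : ∀ s, ‖A s‖ ≤ M) (s : ℝ) (X : Matrix ι κ ℝ) :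
    ‖A s * X‖ ≤ Fintype.card ι * M * ‖X‖ :=
  (Matrix.norm_mul_le_card_mul _ _).trans (by gcongr; exact hA s)

variable {f : ℝ → Matrix ι κ ℝ}

lemma norm_le_mul_exp_of_hasDerivAt_mul (hf : ∀ s, HasDerivAt f (A s * f s) s)
    (hA : ∀ s, ‖A s‖ ≤ M) {a b : ℝ} :
    ∀ s ∈ Icc a b, ‖f s‖ ≤ ‖f a‖ * Real.exp (Fintype.card ι * M * (s - a)) := by
  intro s hs
  rw [← gronwallBound_ε0]
  exact norm_le_gronwallBound_of_norm_deriv_right_le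
    (fun r _ => (hf r).continuousAt.continuousWithinAt) (fun r _ => (hf r).hasDerivWithinAt)
    le_rfl (fun r _ => by simpa using norm_mul_le_of_forall_norm_le hA r (f r)) s hs

lemma norm_sub_le_of_hasDerivAt_mul (hf : ∀ s, HasDerivAt f (A s * f s) s)
    (hA : ∀ s, ‖A s‖ ≤ M) (hM : 0 ≤ M) {a b R : ℝ} (hR : ∀ s ∈ Icc a b, ‖f s‖ ≤ R) :
    ∀ σ ∈ Icc a b, ∀ τ ∈ Icc a b, ‖f τ - f σ‖ ≤ Fintype.card ι * M * R * |τ - σ| := by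
  intro σ hσ τ hτ
  simpa [Real.norm_eq_abs] using (convex_Icc a b).norm_image_sub_le_of_norm_hasDerivWithin_le
    (fun r _ => (hf r).hasDerivWithinAt)
    (fun r hr => (norm_mul_le_of_forall_norm_le hA r (f r)).trans (by gcongr; exact hR r hr))
    hσ hτ

end LinearODE

/-- Triples `(a, σ, τ)` with `σ, τ ∈ [a, a + T]` and `τ - σ → 0`: `F a τ - F a σ → 0` along this
filter says that the family `F a` is equicontinuous on the windows, uniformly in `a`. -/
def windowDiag (T : ℝ) : Filter (ℝ × ℝ × ℝ) :=
  comap (fun x => x.2.2 - x.2.1) (𝓝 0) ⊓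
    𝓟 {x | x.2.1 ∈ Icc x.1 (x.1 + T) ∧ x.2.2 ∈ Icc x.1 (x.1 + T)}

namespace windowDiag

variable {T : ℝ}

lemma tendsto_sub : Tendsto (fun x : ℝ × ℝ × ℝ => x.2.2 - x.2.1) (windowDiag T) (𝓝 0) :=
  tendsto_comap.mono_left inf_le_left

lemma eventually_mem :
    ∀ᶠ x in windowDiag T, x.2.1 ∈ Icc x.1 (x.1 + T) ∧ x.2.2 ∈ Icc x.1 (x.1 + T) :=
  mem_inf_of_right (mem_principal_self _)

lemma exists_pos_forall {P : ℝ × ℝ × ℝ → Prop} (h : ∀ᶠ x in windowDiag T, P x) :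
    ∃ η > 0, ∀ a σ τ, σ ∈ Icc a (a + T) → τ ∈ Icc a (a + T) → |τ - σ| ≤ η → P (a, σ, τ) := by
  obtain ⟨η, hη, hP⟩ := ((Metric.nhds_basis_closedBall.comap _).inf_principal _).eventually_iff.1 h
  exact ⟨η, hη, fun a σ τ hσ hτ hστ => hP ⟨by simpa [Real.dist_eq] using hστ, hσ, hτ⟩⟩

end windowDiag

lemma UniformContinuous.tendsto_windowDiag {E : Type*} [SeminormedAddCommGroup E] {f : ℝ → E}
    (hf : UniformContinuous f) (T : ℝ) :
    Tendsto (fun x : ℝ × ℝ × ℝ => f x.2.2 - f x.2.1) (windowDiag T) (𝓝 0) := by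
  rw [UniformContinuous, uniformity_eq_comap_nhds_zero ℝ, uniformity_eq_comap_nhds_zero E,
    tendsto_comap_iff] at hf
  exact (hf.comp (tendsto_comap_iff.2 tendsto_comap)).mono_left inf_le_left

section Observability

variable {ι κ : Type*} [Fintype ι] [Fintype κ]

def observabilityIntegrand (C : ℝ → Matrix κ ι ℝ) (Φ : ℝ → ℝ → Matrix ι ι ℝ) (a τ : ℝ) :
    Matrix ι ι ℝ :=
  (Φ τ a)ᵀ * (C τ)ᵀ * C τ * Φ τ a

variable {C : ℝ → Matrix κ ι ℝ} {Φ : ℝ → ℝ → Matrix ι ι ℝ}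

lemma observabilityIntegrand_eq (a τ : ℝ) :
    observabilityIntegrand C Φ a τ = (C τ * Φ τ a)ᵀ * (C τ * Φ τ a) := by
  simp [observabilityIntegrand, Matrix.transpose_mul, Matrix.mul_assoc]

lemma posSemidef_observabilityIntegrand (a τ : ℝ) :
    (observabilityIntegrand C Φ a τ).PosSemidef := by
  rw [observabilityIntegrand_eq, ← Matrix.conjTranspose_eq_transpose_of_trivial]
  exact Matrix.posSemidef_conjTranspose_mul_self _

lemma continuous_observabilityIntegrand (hC : Continuous C) (hΦ : ∀ a, Continuous (Φ · a))
    (a : ℝ) : Continuous (observabilityIntegrand C Φ a) :=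
  (((hΦ a).matrix_transpose.matrix_mul hC.matrix_transpose).matrix_mul hC).matrix_mul (hΦ a)

variable [DecidableEq ι] {A : ℝ → Matrix ι ι ℝ} {MA MC : ℝ}

lemma tendsto_observabilityIntegrand_sub (hA : ∀ s, ‖A s‖ ≤ MA) (hMA : 0 ≤ MA)
    (hC : UniformContinuous C) (hCbd : ∀ s, ‖C s‖ ≤ MC) (hMC : 0 ≤ MC)
    (hΦ : ∀ a s, HasDerivAt (Φ · a) (A s * Φ s a) s) (hΦinit : ∀ a, Φ a a = 1) (T : ℝ) :
    Tendsto (fun x : ℝ × ℝ × ℝ =>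
      observabilityIntegrand C Φ x.1 x.2.2 - observabilityIntegrand C Φ x.1 x.2.1)
      (windowDiag T) (𝓝 0) := by
  set B := ‖(1 : Matrix ι ι ℝ)‖ * Real.exp (Fintype.card ι * MA * T)
  have hΦbd : ∀ a, ∀ s ∈ Icc a (a + T), ‖Φ s a‖ ≤ B := fun a s hs => by
    refine (norm_le_mul_exp_of_hasDerivAt_mul (hΦ a) hA s hs).trans ?_
    rw [hΦinit]
    refine mul_le_mul_of_nonneg_left (Real.exp_le_exp.2 ?_) (norm_nonneg _)
    exact mul_le_mul_of_nonneg_left (by linarith [hs.2]) (by positivity)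
  have hΦsub : Tendsto (fun x : ℝ × ℝ × ℝ => Φ x.2.2 x.1 - Φ x.2.1 x.1) (windowDiag T) (𝓝 0) := by
    refine squeeze_zero_norm' (windowDiag.eventually_mem.mono fun x hx =>
      norm_sub_le_of_hasDerivAt_mul (hΦ x.1) hA hMA (hΦbd x.1) _ hx.1 _ hx.2) ?_
    simpa using (windowDiag.tendsto_sub.abs).const_mul (Fintype.card ι * MA * B)
  have hWbd : ∀ a, ∀ s ∈ Icc a (a + T), ‖C s * Φ s a‖ ≤ Fintype.card ι * MC * B :=
    fun a s hs => (Matrix.norm_mul_le_card_mul _ _).trans (by gcongr; exacts [hCbd s, hΦbd a s hs])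
  have hWsub := Matrix.tendsto_mul_sub_mul_nhds_zero (hC.tendsto_windowDiag T) hΦsub
    (Eventually.of_forall fun x => hCbd x.2.1)
    (windowDiag.eventually_mem.mono fun x hx => hΦbd x.1 _ hx.2)
  simp_rw [observabilityIntegrand_eq]
  refine Matrix.tendsto_mul_sub_mul_nhds_zero ?_ hWsub
    (windowDiag.eventually_mem.mono fun x hx =>
      (Matrix.norm_transpose _).trans_le (hWbd x.1 _ hx.1))
    (windowDiag.eventually_mem.mono fun x hx => hWbd x.1 _ hx.2)
  refine tendsto_zero_iff_norm_tendsto_zero.2 ?_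
  simpa only [← Matrix.transpose_sub, Matrix.norm_transpose, norm_zero] using hWsub.norm

end Observability

section Sampling

variable {t : ℕ → ℝ} {Tmin Tmax : ℝ}

lemma mem_Icc_add_mul_of_forall_sub_mem_Icc (hT : ∀ k, t (k + 1) - t k ∈ Icc Tmin Tmax)
    (k j : ℕ) : t (k + j) ∈ Icc (t k + j * Tmin) (t k + j * Tmax) := by
  induction j with
  | zero => simp
  | succ j ih =>
    rw [← add_assoc]
    have := hT (k + j)
    constructor <;> push_cast <;> linarith [ih.1, ih.2, this.1, this.2]

lemma mem_window_of_mem_Icc_sample (hT : ∀ k, t (k + 1) - t k ∈ Icc Tmin Tmax)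
    (hTmin : 0 ≤ Tmin) {k i N : ℕ} (hi : i < N) {τ : ℝ}
    (hτ : τ ∈ Icc (t (k + i)) (t (k + i) + Tmin)) : τ ∈ Icc (t k) (t k + N * Tmax) := by
  have hTmax : 0 ≤ Tmax := hTmin.trans ((hT 0).1.trans (hT 0).2)
  have hiN : ((i + 1 : ℕ) : ℝ) * Tmax ≤ N * Tmax :=
    mul_le_mul_of_nonneg_right (by exact_mod_cast hi) hTmax
  have h₁ := (mem_Icc_add_mul_of_forall_sub_mem_Icc hT k i).1
  have h₂ := (mem_Icc_add_mul_of_forall_sub_mem_Icc hT k (i + 1)).2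
  have h₃ := (hT (k + i)).1
  rw [← add_assoc] at h₂
  constructor <;> nlinarith [hτ.1, hτ.2]

end Sampling

theorem sampled_UCO_implies_continuous_gramian_bound_general {n p : ℕ}
    (A : ℝ → Matrix (Fin n) (Fin n) ℝ) (C : ℝ → Matrix (Fin p) (Fin n) ℝ)
    (MA : ℝ) (hAbd : ∀ t, ‖A t‖ ≤ MA)
    (hC : UniformContinuous C) (MC : ℝ) (hCbd : ∀ t, ‖C t‖ ≤ MC)
    (Φ : ℝ → ℝ → Matrix (Fin n) (Fin n) ℝ)
    (hΦ : ∀ τ s, HasDerivAt (fun r => Φ r τ) (A s * Φ s τ) s)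
    (hΦinit : ∀ τ, Φ τ τ = 1)
    (t : ℕ → ℝ)
    (Tmin Tmax : ℝ) (hTmin : 0 < Tmin)
    (hT : ∀ k, t (k + 1) - t k ∈ Set.Icc Tmin Tmax)
    (k₁ : ℕ) (δ : ℝ) (hδ : 0 < δ)
    (hUCO : ∀ k : ℕ,
      ((∑ i ∈ Finset.range (k₁ + 1),
          (Φ (t (k + i)) (t k))ᵀ * (C (t (k + i)))ᵀ * C (t (k + i)) * Φ (t (k + i)) (t k))
        - δ • (1 : Matrix (Fin n) (Fin n) ℝ)).PosSemidef) :
    ∃ δ' : ℝ, 0 < δ' ∧ ∀ k : ℕ,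
      ((∫ τ in t k..t (k + k₁ + 1), (Φ τ (t k))ᵀ * (C τ)ᵀ * C τ * Φ τ (t k))
        - δ' • (1 : Matrix (Fin n) (Fin n) ℝ)).PosSemidef := by
  set N := k₁ + 1
  set ε : ℝ := δ / (2 * (N * (n + 1)))
  have hN : (0 : ℝ) < N := by positivity
  have hε : 0 < ε := by positivity
  have hNε : δ / 2 + N * Fintype.card (Fin n) * ε ≤ δ := by
    rw [Fintype.card_fin, show (N : ℝ) * n * ε = δ / 2 * (n / (n + 1)) by simp only [ε]; field_simp]
    nlinarith [div_le_one_of_le₀ (by linarith : (n : ℝ) ≤ n + 1) (by positivity : (0 : ℝ) ≤ n + 1)]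
  obtain ⟨η, hη, hGη⟩ := windowDiag.exists_pos_forall <|
    (tendsto_zero_iff_norm_tendsto_zero.1 <| tendsto_observabilityIntegrand_sub hAbd
      ((norm_nonneg _).trans (hAbd 0)) hC hCbd ((norm_nonneg _).trans (hCbd 0)) hΦ hΦinit
      (N * Tmax)).eventually (ge_mem_nhds hε)
  refine ⟨min η Tmin * (δ / 2), by positivity, fun k => ?_⟩
  have hwin : ∀ i < N, ∀ τ ∈ Icc (t (k + i)) (t (k + i) + Tmin), τ ∈ Icc (t k) (t k + N * Tmax) :=
    fun i hi τ hτ => mem_window_of_mem_Icc_sample hT hTmin.le hi hτ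
  have key := Matrix.posSemidef_intervalIntegral_sub_smul_one (s := fun i => t (k + i))
    (N := N) (η := min η Tmin)
    (continuous_observabilityIntegrand hC.continuous
      (fun a => continuous_iff_continuousAt.2 fun r => (hΦ a r).continuousAt) (t k))
    (posSemidef_observabilityIntegrand (t k)) (by positivity)
    (fun i _ => by rw [← add_assoc]; linarith [(hT (k + i)).1, min_le_right η Tmin])
    (fun i hi τ hτ => hGη _ _ _ (hwin i hi _ ⟨le_rfl, by linarith⟩)
      (hwin i hi τ ⟨hτ.1, hτ.2.trans (by gcongr; exact min_le_right _ _)⟩)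
      (abs_le.2 ⟨by linarith [hτ.1], by linarith [hτ.2, min_le_left η Tmin]⟩))
    hNε (hUCO k)
  simpa [observabilityIntegrand, N, add_assoc] using key

/-- For the sampled LTV system with exact discretization
`F_k = Φ(t_{k+1}, t_k)` (so `Ψ(i,k) = Φ(t_i, t_k)`): if the output matrix `C` is bounded
and uniformly continuous, the (continuous, bounded) system matrix `A` generates the
transition matrix `Φ`, and the sampling intervals are uniformly bounded above and below,
then uniform complete observability of the sampled pair — i.e. the discrete Gramians
`∑_{i=k}^{k+k₁} Ψ(i,k)ᵀ C(t_i)ᵀ C(t_i) Ψ(i,k) ⪰ δ I` for all `k` — implies a uniform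
lower bound `δ' I` on the continuous-time observability Gramians over `[t_k, t_{k+k₁+1}]`:
continuous-time uniform complete observability is necessary for sampled UCO. -/
theorem sampled_UCO_implies_continuous_gramian_bound {n p : ℕ}
    (A : ℝ → Matrix (Fin n) (Fin n) ℝ) (C : ℝ → Matrix (Fin p) (Fin n) ℝ)
    (hA : Continuous A) (MA : ℝ) (hAbd : ∀ t, ‖A t‖ ≤ MA)
    (hC : UniformContinuous C) (MC : ℝ) (hCbd : ∀ t, ‖C t‖ ≤ MC)
    (Φ : ℝ → ℝ → Matrix (Fin n) (Fin n) ℝ)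
    (hΦ : ∀ τ s, HasDerivAt (fun r => Φ r τ) (A s * Φ s τ) s)
    (hΦinit : ∀ τ, Φ τ τ = 1)
    (t : ℕ → ℝ) (ht : StrictMono t)
    (Tmin Tmax : ℝ) (hTmin : 0 < Tmin)
    (hT : ∀ k, t (k + 1) - t k ∈ Set.Icc Tmin Tmax)
    (k₁ : ℕ) (δ : ℝ) (hδ : 0 < δ)
    (hUCO : ∀ k : ℕ,
      ((∑ i ∈ Finset.range (k₁ + 1),
          (Φ (t (k + i)) (t k))ᵀ * (C (t (k + i)))ᵀ * C (t (k + i)) * Φ (t (k + i)) (t k))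
        - δ • (1 : Matrix (Fin n) (Fin n) ℝ)).PosSemidef) :
    ∃ δ' : ℝ, 0 < δ' ∧ ∀ k : ℕ,
      ((∫ τ in t k..t (k + k₁ + 1), (Φ τ (t k))ᵀ * (C τ)ᵀ * C τ * Φ τ (t k))
        - δ' • (1 : Matrix (Fin n) (Fin n) ℝ)).PosSemidef :=
  sampled_UCO_implies_continuous_gramian_bound_general A C MA hAbd hC MC hCbd Φ hΦ hΦinit t Tmin
    Tmax hTmin hT k₁ δ hδ hUCO
end
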